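/- Suppose 0 < |μ| < 1, k > 0, η ≠ 0 and |μ(1 + kη/2)| > 1. Then there exists N such that for every n ≥ N there is a connected finite simple undirected graph G on n vertices (namely the star graph) for which, writing λ₁ for the largest eigenvalue of its Laplacian and |E| for its number of edges, one has |μ| · |1 + kηλ₁/(2|E|)| > 1; consequently the Jacobian J = μ((kη/(2|E|))·L + I) has an eigenvalue of absolute value greater than 1, and there exists a nonzero v ∈ ℝ^n with ‖J^t v‖ → ∞. -/

import Mathlib

/-! For the star graph on `n` vertices the Laplacian has `n - 1` edges and top eigenvalue `n`:
every Laplacian eigenvalue is at most the number of vertices, and `n • e_center - 1` attains it.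
So the Jacobian has the eigenvalue `μ (1 + kη n / (2 (n - 1)))`, which tends to `μ (1 + kη / 2)`
and hence eventually has modulus `> 1`; its eigenvector then grows geometrically under `J ^ t`. -/

open Filter Topology Finset Matrix

namespace Matrix

variable {n R : Type*} [Fintype n] [DecidableEq n]

theorem pow_mulVec_of_mulVec_eq_smul [CommSemiring R] {A : Matrix n n R} {v : n → R} {c : R}
    (h : A *ᵥ v = c • v) (t : ℕ) : (A ^ t) *ᵥ v = c ^ t • v := by
  induction t with
  | zero => simp
  | succ t ih => rw [pow_succ', ← mulVec_mulVec, ih, mulVec_smul, h, smul_smul, pow_succ]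

theorem tendsto_norm_pow_mulVec_atTop [NormedField R] {A : Matrix n n R} {v : n → R} {c : R}
    (h : A *ᵥ v = c • v) (hv : v ≠ 0) (hc : 1 < ‖c‖) :
    Tendsto (fun t : ℕ => ‖(A ^ t) *ᵥ v‖) atTop atTop := by
  simp_rw [pow_mulVec_of_mulVec_eq_smul h, norm_smul, norm_pow]
  exact (tendsto_pow_atTop_atTop_of_one_lt hc).atTop_mul_const (norm_pos_iff.mpr hv)

theorem smul_add_one_mulVec_of_mulVec_eq_smul [CommSemiring R] {A : Matrix n n R} {v : n → R}
    {b : R} (h : A *ᵥ v = b • v) (μ a : R) :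
    (μ • (a • A + 1)) *ᵥ v = (μ * (a * b + 1)) • v := by
  rw [smul_mulVec, add_mulVec, smul_mulVec, h, one_mulVec]
  module

end Matrix

theorem Finset.sum_sum_sub_sq {ι R : Type*} [CommRing R] (s : Finset ι) (x : ι → R) :
    ∑ i ∈ s, ∑ j ∈ s, (x i - x j) ^ 2 = 2 * (#s * ∑ i ∈ s, x i ^ 2 - (∑ i ∈ s, x i) ^ 2) := by
  simp only [sub_sq, sum_add_distrib, sum_sub_distrib, sum_const, ← mul_sum, ← sum_mul, nsmul_eq_mul]
  ring

namespace SimpleGraph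

variable {V R : Type*} [Fintype V] [DecidableEq V]

theorem dotProduct_lapMatrix_mulVec_le_card_mul [Field R] [LinearOrder R] [IsStrictOrderedRing R]
    (G : SimpleGraph V) [DecidableRel G.Adj] (x : V → R) :
    x ⬝ᵥ (G.lapMatrix R *ᵥ x) ≤ Fintype.card V * (x ⬝ᵥ x) := by
  rw [← toLinearMap₂'_apply', lapMatrix_toLinearMap₂']
  calc (∑ i, ∑ j, if G.Adj i j then (x i - x j) ^ 2 else 0) / 2
      ≤ (∑ i, ∑ j, (x i - x j) ^ 2) / 2 := by
        gcongr with i _ j _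
        split_ifs
        exacts [le_rfl, sq_nonneg _]
    _ = Fintype.card V * (x ⬝ᵥ x) - (∑ i, x i) ^ 2 := by
        rw [sum_sum_sub_sq, card_univ, dotProduct]; simp only [sq]; ring
    _ ≤ Fintype.card V * (x ⬝ᵥ x) := sub_le_self _ (sq_nonneg _)

theorem le_card_of_lapMatrix_mulVec_eq_smul [Field R] [LinearOrder R] [IsStrictOrderedRing R]
    (G : SimpleGraph V) [DecidableRel G.Adj] {b : R} {x : V → R} (hx : x ≠ 0)
    (h : G.lapMatrix R *ᵥ x = b • x) : b ≤ Fintype.card V := by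
  have hpos : 0 < x ⬝ᵥ x :=
    (sum_nonneg fun i _ => mul_self_nonneg (x i)).lt_of_ne' (dotProduct_self_eq_zero.not.mpr hx)
  have := G.dotProduct_lapMatrix_mulVec_le_card_mul x
  rw [h, dotProduct_smul, smul_eq_mul] at this
  exact le_of_mul_le_mul_right this hpos

theorem card_edgeFinset_starGraph (r : V) :
    #(starGraph r).edgeFinset = Fintype.card V - 1 := by
  have := (isTree_starGraph r).card_edgeFinset
  omega

theorem lapMatrix_starGraph_mulVec_single [NonAssocRing R] (r : V) :
    (starGraph r).lapMatrix R *ᵥ Pi.single r 1 = (Fintype.card V : R) • Pi.single r 1 - 1 := by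
  ext v
  rw [lapMatrix_mulVec_apply]
  rcases eq_or_ne v r with rfl | hv
  · simp [degree_starGraph_center, Nat.cast_pred (Fintype.card_pos_iff.mpr ⟨v⟩)]
  · simp [degree_starGraph_of_ne_center hv, hv]

theorem lapMatrix_starGraph_mulVec_eq_card_smul [CommRing R] (r : V) :
    (starGraph r).lapMatrix R *ᵥ ((Fintype.card V : R) • Pi.single r 1 - 1) =
      (Fintype.card V : R) • ((Fintype.card V : R) • Pi.single r 1 - 1) := by
  rw [mulVec_sub, mulVec_smul, lapMatrix_starGraph_mulVec_single, Pi.one_def,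
    lapMatrix_mulVec_const_eq_zero, sub_zero]

theorem isGreatest_eigenvalues_lapMatrix_starGraph [Field R] [LinearOrder R]
    [IsStrictOrderedRing R] [Nontrivial V] (r : V) :
    IsGreatest {b : R | ∃ x : V → R, x ≠ 0 ∧ (starGraph r).lapMatrix R *ᵥ x = b • x}
      (Fintype.card V) := by
  refine ⟨⟨_, fun h => ?_, lapMatrix_starGraph_mulVec_eq_card_smul r⟩,
    fun b ⟨x, hx, h⟩ => le_card_of_lapMatrix_mulVec_eq_smul _ hx h⟩
  obtain ⟨v, hv⟩ := exists_ne r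
  simpa [hv] using congrFun h v

end SimpleGraph

theorem tendsto_abs_mul_one_add_mul_div_two_mul_sub_one (μ c : ℝ) :
    Tendsto (fun n : ℕ => |μ| * |1 + c * n / (2 * ((n : ℝ) - 1))|) atTop
      (𝓝 |μ * (1 + c / 2)|) := by
  let f : ℝ → ℝ := fun t => |μ| * |1 + c / 2 * t|
  have hf : Tendsto f (𝓝 1) (𝓝 |μ * (1 + c / 2)|) := by
    rw [abs_mul, ← mul_one (c / 2)]
    exact (by fun_prop : Continuous f).tendsto 1
  refine (hf.comp (tendsto_natCast_div_add_atTop (-1 : ℝ))).congr fun n => ?_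
  simp only [f, Function.comp_apply, ← sub_eq_add_neg]
  rw [mul_comm (2 : ℝ), ← div_div]
  congr 2
  ring

theorem equal_wealth_unstable_some_graph_general (η μ k : ℝ)
    (hcrit : 1 < |μ * (1 + k * η / 2)|) :
    ∃ N : ℕ, ∀ n : ℕ, N ≤ n →
      ∃ (G : SimpleGraph (Fin n)) (_ : DecidableRel G.Adj), G.Connected ∧
        ∃ lam1 : ℝ,
          IsGreatest {b : ℝ | ∃ v : Fin n → ℝ, v ≠ 0 ∧
            (G.lapMatrix ℝ).mulVec v = b • v} lam1 ∧
          1 < |μ| * |1 + k * η * lam1 / (2 * (G.edgeFinset.card : ℝ))| ∧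
          (∃ lam : ℝ, ∃ v : Fin n → ℝ, v ≠ 0 ∧
            ((μ • ((k * η / (2 * (G.edgeFinset.card : ℝ))) • G.lapMatrix ℝ
              + (1 : Matrix (Fin n) (Fin n) ℝ)))).mulVec v = lam • v ∧ 1 < |lam|) ∧
          ∃ v : Fin n → ℝ, v ≠ 0 ∧
            Tendsto
              (fun t : ℕ =>
                ‖((μ • ((k * η / (2 * (G.edgeFinset.card : ℝ))) • G.lapMatrix ℝ
                  + (1 : Matrix (Fin n) (Fin n) ℝ))) ^ t).mulVec v‖)
              atTop atTop := by
  obtain ⟨N, hN⟩ := eventually_atTop.mp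
    (((tendsto_abs_mul_one_add_mul_div_two_mul_sub_one μ (k * η)).eventually
      (eventually_gt_nhds hcrit)).and (eventually_ge_atTop 2))
  refine ⟨N, fun n hn => ?_⟩
  obtain ⟨hrate, hn2⟩ := hN n hn
  have : Nontrivial (Fin n) := Fin.nontrivial_iff_two_le.mpr hn2
  let r : Fin n := ⟨0, by omega⟩
  have hE : (#(SimpleGraph.starGraph r).edgeFinset : ℝ) = n - 1 := by
    rw [SimpleGraph.card_edgeFinset_starGraph, Fintype.card_fin, Nat.cast_pred (by omega)]
  have hL := SimpleGraph.isGreatest_eigenvalues_lapMatrix_starGraph (R := ℝ) r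
  rw [Fintype.card_fin] at hL
  obtain ⟨w, hw0, hw⟩ := hL.1
  have hJ := smul_add_one_mulVec_of_mulVec_eq_smul hw μ (k * η / (2 * (n - 1)))
  have hJ1 : 1 < |μ * (k * η / (2 * (n - 1)) * n + 1)| := by
    rwa [abs_mul, add_comm, div_mul_eq_mul_div]
  refine ⟨SimpleGraph.starGraph r, inferInstance, SimpleGraph.connected_starGraph r, n, hL, ?_⟩
  rw [hE]
  exact ⟨hrate, ⟨_, w, hw0, hJ, hJ1⟩, w, hw0, tendsto_norm_pow_mulVec_atTop hJ hw0 hJ1⟩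

/-- unstable half of the phase transition: if `0 < |μ| < 1`,
`k > 0`, `η ≠ 0` and `|μ (1 + kη/2)| > 1`, then for all large enough `n` there
is a connected graph on `n` vertices (the star graph) with
`|μ| * |1 + kηλ₁/(2|E|)| > 1`; the Jacobian `J = μ ((kη/(2|E|)) L + I)` has an
eigenvalue of absolute value greater than `1`, and some nonzero `v` satisfies
`‖J ^ t v‖ → ∞`. -/
theorem equal_wealth_unstable_some_graph (η μ k : ℝ)
    (hμ0 : 0 < |μ|) (hμ1 : |μ| < 1) (hk : 0 < k) (hη : η ≠ 0)
    (hcrit : 1 < |μ * (1 + k * η / 2)|) :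
    ∃ N : ℕ, ∀ n : ℕ, N ≤ n →
      ∃ (G : SimpleGraph (Fin n)) (_ : DecidableRel G.Adj), G.Connected ∧
        ∃ lam1 : ℝ,
          IsGreatest {b : ℝ | ∃ v : Fin n → ℝ, v ≠ 0 ∧
            (G.lapMatrix ℝ).mulVec v = b • v} lam1 ∧
          1 < |μ| * |1 + k * η * lam1 / (2 * (G.edgeFinset.card : ℝ))| ∧
          (∃ lam : ℝ, ∃ v : Fin n → ℝ, v ≠ 0 ∧
            ((μ • ((k * η / (2 * (G.edgeFinset.card : ℝ))) • G.lapMatrix ℝ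
              + (1 : Matrix (Fin n) (Fin n) ℝ)))).mulVec v = lam • v ∧ 1 < |lam|) ∧
          ∃ v : Fin n → ℝ, v ≠ 0 ∧
            Tendsto
              (fun t : ℕ =>
                ‖((μ • ((k * η / (2 * (G.edgeFinset.card : ℝ))) • G.lapMatrix ℝ
                  + (1 : Matrix (Fin n) (Fin n) ℝ))) ^ t).mulVec v‖)
              atTop atTop :=
  equal_wealth_unstable_some_graph_general η μ k hcrit
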